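/- Let K be a subgroup of a finite group H, θ an automorphism of H of order two, ρ a representation of K, and χ a character of H^θ such that the conjugate ^hχ equals χ for all h ∈ H_θ. If h₁, h₂ ∈ H lie in distinct double cosets of K\H/H^θ but h₁H_θ = h₂H_θ, then the Mackey summands coincide: Hom_{K ∩ H^{h₁·θ}}(ρ, ^{h₁}χ) = Hom_{K ∩ H^{h₂·θ}}(ρ, ^{h₂}χ). -/
import Mathlib


namespace Stmt8

variable {G : Type*} [Group G]

/-- The action of `g` on automorphisms: `(g · θ)(h) = g θ(g⁻¹ h g) g⁻¹`. -/
def conjAct (g : G) (θ : MulAut G) : MulAut G := MulAut.conj g * θ * (MulAut.conj g)⁻¹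

/-- The fixed points `G^θ` of `θ`, as a subgroup. -/
def fixedSub (θ : MulAut G) : Subgroup G where
  carrier := {g | θ g = g}
  one_mem' := map_one θ
  mul_mem' := by
    intro a b ha hb
    simp only [Set.mem_setOf_eq, map_mul] at *
    rw [ha, hb]
  inv_mem' := by
    intro a ha
    simp only [Set.mem_setOf_eq, map_inv] at *
    rw [ha]

/-- The stabilizer `G_θ = {g : g · θ = θ}` of `θ` under the conjugation action. -/
def stabSub (θ : MulAut G) : Subgroup G where
  carrier := {g | conjAct g θ = θ}
  one_mem' := by simp [conjAct]
  mul_mem' := by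
    intro a b ha hb
    simp only [Set.mem_setOf_eq, conjAct, map_mul, mul_inv_rev] at *
    calc MulAut.conj a * MulAut.conj b * θ * ((MulAut.conj b)⁻¹ * (MulAut.conj a)⁻¹)
        = MulAut.conj a * (MulAut.conj b * θ * (MulAut.conj b)⁻¹) * (MulAut.conj a)⁻¹ := by
          group
      _ = θ := by rw [hb]; exact ha
  inv_mem' := by
    intro a ha
    simp only [Set.mem_setOf_eq, conjAct, map_inv, inv_inv] at *
    rw [mul_inv_eq_iff_eq_mul] at ha
    rw [mul_assoc, ← ha, inv_mul_cancel_left]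


/-- Let `K` be a subgroup of a finite group `H`, `θ` an automorphism of `H` of order two,
`ρ` a representation of `K` on `V`, and `χ` a character of `H^θ` with `ʰχ = χ` for all
`h ∈ H_θ`.  If `h₁, h₂ ∈ H` lie in distinct `(K, H^θ)`-double cosets but
`h₁ H_θ = h₂ H_θ`, then the Mackey summands coincide:
`Hom_{K ∩ H^{h₁·θ}}(ρ, ^{h₁}χ) = Hom_{K ∩ H^{h₂·θ}}(ρ, ^{h₂}χ)`. -/
theorem mackey_summands_coincide {H : Type*} [Group H] [Fintype H]
    {V : Type*} [AddCommGroup V] [Module ℂ V]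
    (θ : MulAut H) (hθ : θ * θ = 1)
    (K : Subgroup H) (ρ : ↥K →* (V →ₗ[ℂ] V))
    (χ : H → ℂ)
    (hχhom : ∀ a b : H, θ a = a → θ b = b → χ (a * b) = χ a * χ b)
    (hinv : ∀ g ∈ stabSub θ, ∀ k : H, θ k = k → χ (g⁻¹ * k * g) = χ k)
    (h₁ h₂ : H)
    (hdistinct : ¬ ∃ k ∈ K, ∃ f : H, θ f = f ∧ h₂ = k * h₁ * f)
    (hcoset : h₁⁻¹ * h₂ ∈ stabSub θ) :
    {l : V →ₗ[ℂ] ℂ | ∀ k : ↥K, conjAct h₁ θ (k : H) = (k : H) →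
        ∀ v : V, l (ρ k v) = χ (h₁⁻¹ * k * h₁) * l v}
      = {l : V →ₗ[ℂ] ℂ | ∀ k : ↥K, conjAct h₂ θ (k : H) = (k : H) →
        ∀ v : V, l (ρ k v) = χ (h₂⁻¹ * k * h₂) * l v} := by
  set g : H := h₁⁻¹ * h₂ with hg
  have hh₂ : h₂ = h₁ * g := by rw [hg]; group
  -- the two twisted automorphisms coincide
  have hconj : conjAct h₂ θ = conjAct h₁ θ := by
    have hst : conjAct g θ = θ := hcoset
    have : conjAct h₂ θ = conjAct h₁ (conjAct g θ) := by
      simp only [conjAct, hh₂, map_mul, mul_inv_rev]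
      group
    rw [this, hst]
  -- fixedness under conjAct h₁ θ gives fixedness of h₁⁻¹ k h₁ under θ
  have hfix : ∀ k : H, conjAct h₁ θ k = k → θ (h₁⁻¹ * k * h₁) = h₁⁻¹ * k * h₁ := by
    intro k hk
    have : h₁ * θ (h₁⁻¹ * k * h₁) * h₁⁻¹ = k := by
      have h' : conjAct h₁ θ k = h₁ * θ (h₁⁻¹ * k * h₁) * h₁⁻¹ := by
        simp [conjAct, MulAut.inv_def, mul_assoc]
      rw [h'] at hk; exact hk
    have := congrArg (fun x => h₁⁻¹ * x * h₁) this
    simpa [mul_assoc] using this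
  -- the characters agree
  have hchi : ∀ k : H, conjAct h₁ θ k = k → χ (h₂⁻¹ * k * h₂) = χ (h₁⁻¹ * k * h₁) := by
    intro k hk
    have := hinv g hcoset (h₁⁻¹ * k * h₁) (hfix k hk)
    have heq : g⁻¹ * (h₁⁻¹ * k * h₁) * g = h₂⁻¹ * k * h₂ := by
      rw [hh₂]; group
    rw [heq] at this
    exact this
  ext l
  simp only [Set.mem_setOf_eq, hconj]
  constructor
  · intro hl k hk v
    rw [hchi k hk]
    exact hl k hk v
  · intro hl k hk v
    rw [← hchi k hk]
    exact hl k hk v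

end Stmt8
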